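/- Variational inequality characterization of normal vectors to prox-regular sets: let K be an r-prox-regular closed subset of a real Hilbert space H, x ∈ K, and v ∈ H. If −v ∈ N_K(x), then ⟨−v, z − x⟩ ≤ (‖v‖/(2r))‖z−x‖² for all z ∈ K. Conversely, if there is σ ≥ 0 with ⟨−v, z − x⟩ ≤ σ‖z−x‖² for all z ∈ K, then −v ∈ N_K(x). -/

import Mathlib

/-!
A nearest point `x` of `K` to `p` satisfies `2 ⟪p - x, z - x⟫ ≤ ‖z - x‖²` for every `z ∈ K`,
since `‖z - p‖² ≥ ‖x - p‖²`. Prox-regularity lets one push any proximal normal direction `y - x`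
out to distance `r` while keeping `x` as a nearest point (first shrink `y` towards `x` so that its
distance to `K` lies in `(0, r)`), which gives the hypomonotonicity constant `‖y - x‖ / (2r)`.
Conversely, if `⟪u, z - x⟫ ≤ σ ‖z - x‖²` on `K`, then `x` is a nearest point of `K` to `x + t u`
as soon as `2tσ ≤ 1`, so `u` is a proximal normal.
-/

open Metric Set
open scoped RealInnerProductSpace

variable {H : Type*} [NormedAddCommGroup H] [InnerProductSpace ℝ H]

/-- The set of nearest points of `K` to `y`. -/
noncomputable def projSet (K : Set H) (y : H) : Set H :=
  {x | x ∈ K ∧ ‖x - y‖ = Metric.infDist y K}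

/-- The proximal normal cone to `K` at `x`. -/
def proxNormalCone (K : Set H) (x : H) : Set H :=
  {u | ∃ l : ℝ, 0 ≤ l ∧ ∃ y : H, x ∈ projSet K y ∧ u = l • (y - x)}

/-- `K` is `r`-prox-regular. -/
def IsProxRegular (r : ℝ) (K : Set H) : Prop :=
  ∀ y : H, 0 < Metric.infDist y K → Metric.infDist y K < r →
    (projSet K y).Nonempty ∧
      ∀ x ∈ projSet K y, x ∈ projSet K (x + (r / ‖y - x‖) • (y - x))

/-- The excess of `A` over `B`: `e(A,B) = sup_{a ∈ A} d(a,B)`. -/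
noncomputable def excess (A B : Set H) : ENNReal := ⨆ a ∈ A, EMetric.infEdist a B

variable {K : Set H} {r σ : ℝ} {x y z u : H}

omit [InnerProductSpace ℝ H] in
lemma mem_projSet_iff : x ∈ projSet K y ↔ x ∈ K ∧ ∀ z ∈ K, ‖x - y‖ ≤ ‖z - y‖ := by
  refine ⟨fun ⟨hx, hd⟩ => ⟨hx, fun z hz => ?_⟩, fun ⟨hx, hle⟩ => ⟨hx, le_antisymm ?_ ?_⟩⟩
  · rw [hd, ← dist_eq_norm_sub']
    exact infDist_le_dist_of_mem hz
  · exact (le_infDist ⟨x, hx⟩).2 fun z hz => by rw [dist_eq_norm_sub']; exact hle z hz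
  · rw [← dist_eq_norm_sub']
    exact infDist_le_dist_of_mem hx

lemma mem_projSet_add_smul_sub (h : x ∈ projSet K y) {s : ℝ} (hs₀ : 0 ≤ s) (hs₁ : s ≤ 1) :
    x ∈ projSet K (x + s • (y - x)) := by
  rw [mem_projSet_iff] at h ⊢
  refine ⟨h.1, fun z hz => ?_⟩
  set y' := x + s • (y - x)
  have hxy' : ‖x - y'‖ = s * ‖x - y‖ := by
    rw [show x - y' = s • (x - y) by module, norm_smul, Real.norm_of_nonneg hs₀]
  have hy'y : ‖y' - y‖ = (1 - s) * ‖x - y‖ := by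
    rw [show y' - y = (1 - s) • (x - y) by module, norm_smul,
      Real.norm_of_nonneg (sub_nonneg.2 hs₁)]
  linarith [h.2 z hz, norm_sub_le_norm_sub_add_norm_sub z y' y]

lemma two_inner_le_of_mem_projSet (h : x ∈ projSet K y) (hz : z ∈ K) :
    2 * ⟪y - x, z - x⟫ ≤ ‖z - x‖ ^ 2 := by
  have hsq : ‖x - y‖ ^ 2 ≤ ‖z - y‖ ^ 2 :=
    pow_le_pow_left₀ (norm_nonneg _) ((mem_projSet_iff.1 h).2 z hz) 2
  rw [show z - y = (z - x) - (y - x) by abel, norm_sub_sq_real (z - x), norm_sub_rev x y,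
    real_inner_comm] at hsq
  linarith

namespace IsProxRegular

variable (hreg : IsProxRegular r K) (hr : 0 < r)
include hreg hr

lemma mem_projSet_add_smul_sub (h : x ∈ projSet K y) (hyx : y ≠ x) :
    x ∈ projSet K (x + (r / ‖y - x‖) • (y - x)) := by
  set d := ‖y - x‖
  have hd : 0 < d := norm_pos_iff.2 (sub_ne_zero.2 hyx)
  set s := min 1 (r / (2 * d))
  have hs : 0 < s := lt_min one_pos (by positivity)
  have hsd : s * d < r := calc
    s * d ≤ r / (2 * d) * d := by gcongr; exact min_le_right _ _
    _ = r / 2 := by field_simp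
    _ < r := half_lt_self hr
  have hy'x : ‖x + s • (y - x) - x‖ = s * d := by
    rw [add_sub_cancel_left, norm_smul, Real.norm_of_nonneg hs.le]
  have h' := _root_.mem_projSet_add_smul_sub h hs.le (min_le_left _ _)
  have hdist : infDist (x + s • (y - x)) K = s * d := by
    rw [← h'.2, norm_sub_rev, hy'x]
  have hfar := (hreg _ (by rw [hdist]; positivity) (by rwa [hdist])).2 x h'
  rw [hy'x, add_sub_cancel_left, smul_smul] at hfar
  convert hfar using 4
  field_simp

lemma inner_le_of_mem_projSet (h : x ∈ projSet K y) (hz : z ∈ K) :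
    ⟪y - x, z - x⟫ ≤ ‖y - x‖ / (2 * r) * ‖z - x‖ ^ 2 := by
  rcases eq_or_ne y x with rfl | hyx
  · simp
  have hd : 0 < ‖y - x‖ := norm_pos_iff.2 (sub_ne_zero.2 hyx)
  have key := two_inner_le_of_mem_projSet (hreg.mem_projSet_add_smul_sub hr h hyx) hz
  rw [add_sub_cancel_left, real_inner_smul_left] at key
  rw [div_mul_eq_mul_div, le_div_iff₀ (by positivity)]
  calc ⟪y - x, z - x⟫ * (2 * r) = ‖y - x‖ * (2 * (r / ‖y - x‖ * ⟪y - x, z - x⟫)) := by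
        field_simp
    _ ≤ ‖y - x‖ * ‖z - x‖ ^ 2 := by gcongr

lemma inner_le_of_mem_proxNormalCone (hu : u ∈ proxNormalCone K x) (hz : z ∈ K) :
    ⟪u, z - x⟫ ≤ ‖u‖ / (2 * r) * ‖z - x‖ ^ 2 := by
  obtain ⟨l, hl, y, h, rfl⟩ := hu
  rw [real_inner_smul_left, norm_smul, Real.norm_of_nonneg hl, mul_div_assoc, mul_assoc]
  exact mul_le_mul_of_nonneg_left (hreg.inner_le_of_mem_projSet hr h hz) hl

end IsProxRegular

lemma mem_projSet_add_smul_of_inner_le (hx : x ∈ K)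
    (h : ∀ z ∈ K, ⟪u, z - x⟫ ≤ σ * ‖z - x‖ ^ 2) {t : ℝ} (ht : 0 ≤ t) (htσ : 2 * t * σ ≤ 1) :
    x ∈ projSet K (x + t • u) := by
  refine mem_projSet_iff.2 ⟨hx, fun z hz => ?_⟩
  have hsq : ‖z - (x + t • u)‖ ^ 2 = ‖z - x‖ ^ 2 - 2 * t * ⟪u, z - x⟫ + ‖t • u‖ ^ 2 := by
    rw [show z - (x + t • u) = (z - x) - t • u by abel, norm_sub_sq_real, real_inner_smul_right,
      real_inner_comm]
    ring
  have hle : ‖x - (x + t • u)‖ ^ 2 ≤ ‖z - (x + t • u)‖ ^ 2 := by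
    rw [sub_add_cancel_left, norm_neg, hsq]
    nlinarith [h z hz, sq_nonneg ‖z - x‖]
  exact pow_le_pow_iff_left₀ (norm_nonneg _) (norm_nonneg _) two_ne_zero |>.1 hle

lemma mem_proxNormalCone_of_inner_le (hx : x ∈ K)
    (h : ∀ z ∈ K, ⟪u, z - x⟫ ≤ σ * ‖z - x‖ ^ 2) : u ∈ proxNormalCone K x := by
  set t := (2 * |σ| + 1)⁻¹
  have ht : 0 < t := by positivity
  have htσ : 2 * t * σ ≤ 1 := by
    rw [mul_comm 2, mul_assoc, inv_mul_le_one₀ (by positivity)]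
    linarith [le_abs_self σ]
  refine ⟨t⁻¹, inv_nonneg.2 ht.le, x + t • u, mem_projSet_add_smul_of_inner_le hx h ht.le htσ, ?_⟩
  rw [add_sub_cancel_left, smul_smul, inv_mul_cancel₀ ht.ne', one_smul]

theorem stmt_17_general (r : ℝ) (hr : 0 < r) (K : Set H)
    (hreg : IsProxRegular r K)
    (x : H) (hx : x ∈ K) (v : H) :
    (-v ∈ proxNormalCone K x →
        ∀ z ∈ K, (inner ℝ (-v) (z - x) : ℝ) ≤ (‖v‖ / (2 * r)) * ‖z - x‖ ^ 2) ∧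
      ((∃ σ : ℝ, 0 ≤ σ ∧ ∀ z ∈ K, (inner ℝ (-v) (z - x) : ℝ) ≤ σ * ‖z - x‖ ^ 2) →
        -v ∈ proxNormalCone K x) := by
  refine ⟨fun hv z hz => ?_, fun ⟨_, _, hσ⟩ => mem_proxNormalCone_of_inner_le hx hσ⟩
  simpa only [norm_neg] using hreg.inner_le_of_mem_proxNormalCone hr hv hz

theorem stmt_17 [CompleteSpace H] (r : ℝ) (hr : 0 < r) (K : Set H)
    (hK : IsClosed K) (hKne : K.Nonempty) (hreg : IsProxRegular r K)
    (x : H) (hx : x ∈ K) (v : H) :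
    (-v ∈ proxNormalCone K x →
        ∀ z ∈ K, (inner ℝ (-v) (z - x) : ℝ) ≤ (‖v‖ / (2 * r)) * ‖z - x‖ ^ 2) ∧
      ((∃ σ : ℝ, 0 ≤ σ ∧ ∀ z ∈ K, (inner ℝ (-v) (z - x) : ℝ) ≤ σ * ‖z - x‖ ^ 2) →
        -v ∈ proxNormalCone K x) :=
  stmt_17_general r hr K hreg x hx v
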